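/- arXiv:1003.3772 — 5 statements merged into one kernel-verified Lean document; each statement's English description precedes it below -/
import Mathlib

section
/- Let G be a finite group, H ≤ G a subgroup, and g ∈ G. Then β^G_H([g]) lies in the ideal T_H of Z_p[H^{ab}], where T_H is the image of the trace map x ↦ Σ_{w ∈ W_G H} w·x·w⁻¹ on Z_p[H^{ab}] for the conjugation action of the Weyl group W_G H = N_G H / H. -/
/- STATEMENT 2: for `H ≤ G` and `g ∈ G`, `β^G_H([g])` lies in the ideal `T_H`,
the image of the trace map `x ↦ Σ_{w ∈ W_G H} w·x·w⁻¹` on `ℤ_p[H^{ab}]`, where the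
Weyl group `W_G H = N_G H / H` acts by conjugation (computed via a set of coset
representatives of `H` in `N_G H`). -/

open scoped Classical

/-- Conjugation by a normalizer element, as an automorphism-type hom `H →* H`. -/
def conjHom {G : Type*} [Group G] (H : Subgroup G) (n : G) (hn : n ∈ Subgroup.normalizer (H : Set G)) :
    ↥H →* ↥H where
  toFun h := ⟨n * h.1 * n⁻¹, (Subgroup.mem_normalizer_iff.mp hn h.1).mp h.2⟩
  map_one' := by ext; simp
  map_mul' a b := by ext; simp

/-- The trace map `x ↦ Σ_{w ∈ W_G H} w x w⁻¹` on `ℤ_p[H^{ab}]`, computed using a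
set `TN` of coset representatives of `H` in `N_G H`. -/
noncomputable def traceMap {p : ℕ} [Fact p.Prime] {G : Type*} [Group G] (H : Subgroup G)
    (TN : Finset G) (x : MonoidAlgebra ℤ_[p] (Abelianization ↥H)) :
    MonoidAlgebra ℤ_[p] (Abelianization ↥H) :=
  ∑ n ∈ TN, if hn : n ∈ Subgroup.normalizer (H : Set G) then
    MonoidAlgebra.mapDomain (Abelianization.map (conjHom H n hn)) x else 0

/-- `β^G_H([g])` computed with the transversal `T`. -/
noncomputable def bmap {p : ℕ} [Fact p.Prime] {G : Type*} [Group G]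
    (H : Subgroup G) (T : Finset G) (g : G) : MonoidAlgebra ℤ_[p] (Abelianization ↥H) :=
  ∑ x ∈ T, if h : x⁻¹ * g * x ∈ H then
    MonoidAlgebra.single (Abelianization.of (⟨x⁻¹ * g * x, h⟩ : ↥H)) (1 : ℤ_[p]) else 0

/-- `T` is a set of left coset representatives for `H` in `G`. -/
def IsTransversal {G : Type*} [Group G] (H : Subgroup G) (T : Finset G) : Prop :=
  ∀ g : G, ∃! x, x ∈ T ∧ x⁻¹ * g ∈ H

/- The normalizer `N = N_G H` acts freely on `G ⧸ H` from the right by `xH ↦ xnH`, and its orbits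
are the cosets `rN`. So if `R` is a transversal of `N` in `G` and `TN` one of `H` in `N`, the cosets
`r n⁻¹ H` (`r ∈ R`, `n ∈ TN`) run exactly once through `G ⧸ H`. The summand of `β^G_H([g])` at `x`
depends only on `xH`, and at `x n⁻¹` it is the image of the summand at `x` under conjugation by `n`.
Hence `β^G_H([g])`, computed with any transversal of `H`, is the trace of `β` computed with `R`. -/

section Transversal

variable {G : Type*} [Group G] {K : Subgroup G}

variable (K) in
theorem exists_isTransversal [Finite G] : ∃ T : Finset G, IsTransversal K T := by
  have := Fintype.ofFinite (G ⧸ K)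
  refine ⟨(Finset.univ : Finset (G ⧸ K)).image Quotient.out, fun g => ⟨(g : G ⧸ K).out, ?_, ?_⟩⟩
  · exact ⟨Finset.mem_image_of_mem _ (Finset.mem_univ _),
      QuotientGroup.eq.mp (QuotientGroup.out_eq' _)⟩
  · rintro _ ⟨hx, hxg⟩
    obtain ⟨q, -, rfl⟩ := Finset.mem_image.mp hx
    rw [← QuotientGroup.eq.mpr hxg, QuotientGroup.out_eq']

theorem IsTransversal.sum_eq_sum_quotient [Fintype (G ⧸ K)] {T : Finset G}
    (hT : IsTransversal K T) {M : Type*} [AddCommMonoid M] {f : G → M}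
    (hf : ∀ x y, x⁻¹ * y ∈ K → f x = f y) :
    ∑ x ∈ T, f x = ∑ q : G ⧸ K, f q.out := by
  refine Finset.sum_bij (fun x _ => (x : G ⧸ K)) (fun _ _ => Finset.mem_univ _) ?_ ?_ ?_
  · intro x hx y hy hxy
    exact (hT y).unique ⟨hx, QuotientGroup.eq.mp hxy⟩ ⟨hy, by simp⟩
  · intro q _
    obtain ⟨x, ⟨hx, hxq⟩, -⟩ := hT q.out
    exact ⟨x, hx, by rw [QuotientGroup.eq.mpr hxq, QuotientGroup.out_eq']⟩
  · intro x _
    exact hf x _ (QuotientGroup.eq.mp (QuotientGroup.out_eq' _).symm)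

end Transversal

section Normalizer

variable {G : Type*} [Group G] {H : Subgroup G}

local notation "N" => Subgroup.normalizer (H : Set G)

theorem sum_sum_mul_inv_eq_sum_quotient [Fintype (G ⧸ H)] {R TN : Finset G}
    (hR : IsTransversal N R) (hTNsub : ∀ n ∈ TN, n ∈ N)
    (hTN : ∀ n ∈ N, ∃! x, x ∈ TN ∧ x⁻¹ * n ∈ H)
    {M : Type*} [AddCommMonoid M] {f : G → M} (hf : ∀ x y, x⁻¹ * y ∈ H → f x = f y) :
    ∑ r ∈ R, ∑ n ∈ TN, f (r * n⁻¹) = ∑ q : G ⧸ H, f q.out := by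
  rw [← Finset.sum_product']
  refine Finset.sum_bij (fun rn _ => ((rn.1 * rn.2⁻¹ : G) : G ⧸ H))
    (fun _ _ => Finset.mem_univ _) ?_ ?_ ?_
  · rintro ⟨r, n⟩ hrn ⟨r', n'⟩ hrn' hq
    simp only [Finset.mem_product] at hrn hrn'
    have hn := hTNsub n hrn.2
    have hn' := hTNsub n' hrn'.2
    have hH : n * (r⁻¹ * r') * n'⁻¹ ∈ H := by
      simpa [mul_assoc] using QuotientGroup.eq.mp hq
    have hr : r = r' := by
      refine (hR r').unique ⟨hrn.1, ?_⟩ ⟨hrn'.1, by simp⟩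
      have : r⁻¹ * r' = n⁻¹ * (n * (r⁻¹ * r') * n'⁻¹) * n' := by group
      rw [this]
      exact mul_mem (mul_mem (inv_mem hn) (Subgroup.le_normalizer hH)) hn'
    subst hr
    have hnn' : n⁻¹ * n' ∈ H := by
      have : n⁻¹ * n' = n⁻¹ * (n * (r⁻¹ * r) * n'⁻¹)⁻¹ * n := by group
      rw [this]
      exact (Subgroup.mem_normalizer_iff''.mp hn _).mp (inv_mem hH)
    rw [(hTN n' hn').unique ⟨hrn.2, hnn'⟩ ⟨hrn'.2, by simp⟩]
  · intro q _
    obtain ⟨r, ⟨hr, hrq⟩, -⟩ := hR q.out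
    obtain ⟨n, ⟨hn, hnq⟩, -⟩ := hTN _ (inv_mem hrq)
    refine ⟨(r, n), Finset.mem_product.mpr ⟨hr, hn⟩, ?_⟩
    have : (r * n⁻¹)⁻¹ * q.out = n * (n⁻¹ * (r⁻¹ * q.out)⁻¹)⁻¹ * n⁻¹ := by group
    rw [← QuotientGroup.out_eq' q, QuotientGroup.eq, this]
    exact (Subgroup.mem_normalizer_iff.mp (hTNsub n hn) _).mp (inv_mem hnq)
  · intro rn _
    exact hf _ _ (QuotientGroup.eq.mp (QuotientGroup.out_eq' _).symm)

variable {p : ℕ} [Fact p.Prime]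

variable (H) in
noncomputable def bmapTerm (g x : G) : MonoidAlgebra ℤ_[p] (Abelianization ↥H) :=
  if h : x⁻¹ * g * x ∈ H then
    MonoidAlgebra.single (Abelianization.of (⟨x⁻¹ * g * x, h⟩ : ↥H)) (1 : ℤ_[p]) else 0

theorem bmap_eq_sum_bmapTerm (T : Finset G) (g : G) :
    bmap (p := p) H T g = ∑ x ∈ T, bmapTerm H g x := rfl

theorem bmapTerm_eq_of_inv_mul_mem (g : G) {x y : G} (hxy : x⁻¹ * y ∈ H) :
    bmapTerm (p := p) H g x = bmapTerm H g y := by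
  have hconj : y⁻¹ * g * y = (x⁻¹ * y)⁻¹ * (x⁻¹ * g * x) * (x⁻¹ * y) := by group
  unfold bmapTerm
  by_cases hx : x⁻¹ * g * x ∈ H
  · have hy : y⁻¹ * g * y ∈ H := hconj ▸ mul_mem (mul_mem (inv_mem hxy) hx) hxy
    have hsub : (⟨y⁻¹ * g * y, hy⟩ : H) = ⟨_, hxy⟩⁻¹ * ⟨_, hx⟩ * ⟨_, hxy⟩ := Subtype.ext hconj
    rw [dif_pos hx, dif_pos hy, hsub, map_mul, map_mul, map_inv, mul_comm, mul_inv_cancel_left]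
  · have hy : y⁻¹ * g * y ∉ H := fun hy => hx <| by
      have : x⁻¹ * g * x = (x⁻¹ * y) * (y⁻¹ * g * y) * (x⁻¹ * y)⁻¹ := by group
      exact this ▸ mul_mem (mul_mem hxy hy) (inv_mem hxy)
    rw [dif_neg hx, dif_neg hy]

theorem bmapTerm_mul_inv (g x : G) {n : G} (hn : n ∈ N) :
    bmapTerm (p := p) H g (x * n⁻¹) =
      MonoidAlgebra.mapDomain (Abelianization.map (conjHom H n hn)) (bmapTerm H g x) := by
  have hconj : (x * n⁻¹)⁻¹ * g * (x * n⁻¹) = n * (x⁻¹ * g * x) * n⁻¹ := by group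
  have hmem := Subgroup.mem_normalizer_iff.mp hn (x⁻¹ * g * x)
  unfold bmapTerm
  by_cases hx : x⁻¹ * g * x ∈ H
  · rw [dif_pos hx, dif_pos (hconj ▸ hmem.mp hx), MonoidAlgebra.mapDomain_single,
      Abelianization.map_of]
    exact congrArg (fun h => MonoidAlgebra.single (Abelianization.of h) 1) (Subtype.ext hconj)
  · rw [dif_neg hx, dif_neg (hconj ▸ mt hmem.mpr hx), MonoidAlgebra.mapDomain_zero]

theorem traceMap_bmap {TN : Finset G} (hTNsub : ∀ n ∈ TN, n ∈ N) (R : Finset G) (g : G) :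
    traceMap (p := p) H TN (bmap H R g) = ∑ n ∈ TN, ∑ r ∈ R, bmapTerm H g (r * n⁻¹) := by
  refine Finset.sum_congr rfl fun n hn => ?_
  rw [dif_pos (hTNsub n hn), bmap_eq_sum_bmapTerm, ← MonoidAlgebra.mapDomainRingHom_apply, map_sum]
  simp only [MonoidAlgebra.mapDomainRingHom_apply, bmapTerm_mul_inv _ _ (hTNsub n hn)]

end Normalizer

theorem stmt2 (p : ℕ) [Fact p.Prime] (G : Type*) [Group G] [Fintype G]
    (H : Subgroup G) (g : G)
    (T : Finset G) (hT : IsTransversal H T)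
    (TN : Finset G) (hTNsub : ∀ n ∈ TN, n ∈ Subgroup.normalizer (H : Set G))
    (hTN : ∀ n ∈ Subgroup.normalizer (H : Set G), ∃! x, x ∈ TN ∧ x⁻¹ * n ∈ H) :
    bmap (p := p) H T g ∈ Set.range (traceMap (p := p) H TN) := by
  obtain ⟨R, hR⟩ := exists_isTransversal (Subgroup.normalizer (H : Set G))
  have hf : ∀ x y, x⁻¹ * y ∈ H → bmapTerm (p := p) H g x = bmapTerm H g y :=
    fun _ _ => bmapTerm_eq_of_inv_mul_mem g
  refine ⟨bmap H R g, ?_⟩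
  rw [traceMap_bmap hTNsub, Finset.sum_comm, sum_sum_mul_inv_eq_sum_quotient hR hTNsub hTN hf,
    bmap_eq_sum_bmapTerm, hT.sum_eq_sum_quotient hf]
end

section
/- Let G be a finite group and define τ^G_C : Π_{H ∈ C} Z_p[H] → Q_p[Conj(G)] by τ^G_C((a_H)) = Σ_{H∈C} τ^G_{C,H}(a_H), where for a generator h of the cyclic group H, τ^G_{C,H}(h) = (1/([G:N_G H]·|W_G H|))·[h], and τ^G_{C,H}(h) = 0 if h does not generate H. Then τ^G_C ∘ β^G_C is the identity map on Z_p[Conj(G)]; in particular β^G_C is injective. -/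
/- STATEMENT 4: `τ^G_C ∘ β^G_C` is the identity on `ℤ_p[Conj(G)]`; in particular
`β^G_C` is injective.  Here `C` is the set of cyclic subgroups of `G`,
`β^G_{C,H}([g]) = Σ_{x ∈ C(G,H), x⁻¹gx ∈ H} x⁻¹gx ∈ ℤ_p[H]`, and
`τ^G_{C,H}(h) = [h]/([G:N_G H]·|W_G H|)` for `h` a generator of `H`, `0` otherwise. -/

open scoped Classical

/-- `β^G_{C,H}([g]) ∈ ℤ_p[H]`, computed with the transversal `T`. -/
noncomputable def bmapCyc {p : ℕ} [Fact p.Prime] {G : Type*} [Group G]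
    (H : Subgroup G) (T : Finset G) (g : G) : MonoidAlgebra ℤ_[p] ↥H :=
  ∑ x ∈ T, if h : x⁻¹ * g * x ∈ H then
    MonoidAlgebra.single (⟨x⁻¹ * g * x, h⟩ : ↥H) (1 : ℤ_[p]) else 0

/-- `τ^G_C` applied to a tuple `(a_H)_{H ≤ G}` (only cyclic `H` contribute):
`Σ_{H cyclic} Σ_h a_H(h)·[h]/([G:N_G H]·|W_G H|)`, the inner sum over generators `h`. -/
noncomputable def tauFull {p : ℕ} [Fact p.Prime] {G : Type*} [Group G] [Fintype G]
    (a : ∀ H : Subgroup G, MonoidAlgebra ℤ_[p] ↥H) : ConjClasses G →₀ ℚ_[p] :=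
  ∑ H ∈ Finset.univ.filter (fun H : Subgroup G => IsCyclic ↥H),
    (a H).coeff.sum fun h c =>
      if Subgroup.zpowers (h : G) = H then
        (((c : ℚ_[p]) / (((Subgroup.normalizer (H : Set G)).index : ℚ_[p]) * (H.relIndex (Subgroup.normalizer (H : Set G)) : ℚ_[p]))))
          • Finsupp.single (ConjClasses.mk (h : G)) (1 : ℚ_[p])
      else 0

/-- The linear extension of `β^G_C` to all of `ℤ_p[Conj(G)]` (computed on a fixed
representative of each conjugacy class). -/
noncomputable def betaFull {p : ℕ} [Fact p.Prime] {G : Type*} [Group G]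
    (Tr : Subgroup G → Finset G) (v : ConjClasses G →₀ ℤ_[p]) :
    ∀ H : Subgroup G, MonoidAlgebra ℤ_[p] ↥H :=
  fun H => v.sum fun c z => z • bmapCyc H (Tr H) c.out

/-! `τ ∘ β` is `ℤ_p`-linear, so it suffices to evaluate it on a class `[g]`. Of the terms
`x⁻¹gx` of `β_H([g])`, `τ_H` keeps exactly those that generate `H`, and sends each to
`[g] / [G : H] = [g] / [G : ⟨g⟩]`, since `[G : N_G H]·|W_G H| = [G : H]`. The pairs `(H, xH)` with
`x⁻¹⟨g⟩x = H` are counted by the map `y ↦ (y⁻¹⟨g⟩y, yH)` on `G`, whose fibres are the cosets of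
conjugates of `⟨g⟩`; so there are `[G : ⟨g⟩]` such terms and `τ(β[g]) = [g]`. -/

open scoped Pointwise

namespace Subgroup
variable {G : Type*} [Group G]

lemma index_mulAut_smul (σ : MulAut G) (K : Subgroup G) : (σ • K).index = K.index := by
  rw [pointwise_smul_def]
  exact index_map_of_bijective σ.bijective K

lemma card_mulAut_smul (σ : MulAut G) (K : Subgroup G) : Nat.card ↥(σ • K) = Nat.card K :=
  (Nat.card_congr (equivSMul σ K).toEquiv).symm

lemma conj_inv_smul_zpowers (x g : G) :
    MulAut.conj x⁻¹ • zpowers g = zpowers (x⁻¹ * g * x) := by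
  change map (MulAut.conj x⁻¹).toMonoidHom _ = _
  rw [MonoidHom.map_zpowers]
  simp

lemma conj_inv_smul_eq_iff_of_inv_mul_mem {K H : Subgroup G} {x y : G} (hxy : x⁻¹ * y ∈ H) :
    MulAut.conj x⁻¹ • K = H ↔ MulAut.conj y⁻¹ • K = H := by
  have hy : MulAut.conj y⁻¹ • K = MulAut.conj (x⁻¹ * y)⁻¹ • MulAut.conj x⁻¹ • K := by
    rw [smul_smul, ← map_mul]; group
  constructor
  · intro hx
    rw [hy, hx, conj_smul_eq_self_of_mem (H.inv_mem hxy)]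
  · intro hy'
    rw [hy, map_inv, inv_smul_eq_iff] at hy'
    rw [hy', conj_smul_eq_self_of_mem hxy]

variable [Fintype G]

lemma card_filter_inv_mul_mem (x₀ : G) (H : Subgroup G) :
    (Finset.univ.filter fun y => x₀⁻¹ * y ∈ H).card = Nat.card H := by
  rw [Nat.card_eq_fintype_card, Fintype.card_subtype]
  refine Finset.card_nbij' (x₀⁻¹ * ·) (x₀ * ·) ?_ ?_ ?_ ?_ <;> intro y <;> simp

theorem sum_card_filter_conj_inv_smul_eq_index (Tr : Subgroup G → Finset G)
    (hTr : ∀ H : Subgroup G, ∀ g : G, ∃! x, x ∈ Tr H ∧ x⁻¹ * g ∈ H) (K : Subgroup G) :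
    ∑ H : Subgroup G, ((Tr H).filter fun x => MulAut.conj x⁻¹ • K = H).card = K.index := by
  choose rep hrep using fun H y => (hTr H y).exists
  set B := Finset.univ.sigma fun H => (Tr H).filter fun x => MulAut.conj x⁻¹ • K = H
  let φ : G → (_ : Subgroup G) × G := fun y => ⟨MulAut.conj y⁻¹ • K, rep (MulAut.conj y⁻¹ • K) y⟩
  have hφ : ∀ y ∈ Finset.univ, φ y ∈ B := fun y _ => by
    refine Finset.mem_sigma.2 ⟨Finset.mem_univ _, Finset.mem_filter.2 ⟨(hrep _ y).1, ?_⟩⟩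
    exact (conj_inv_smul_eq_iff_of_inv_mul_mem (hrep _ y).2).2 rfl
  have hfiber : ∀ b ∈ B, (Finset.univ.filter fun y => φ y = b).card = Nat.card K := by
    rintro ⟨H, x₀⟩ hb
    obtain ⟨hx₀, hx₀K⟩ : x₀ ∈ Tr H ∧ MulAut.conj x₀⁻¹ • K = H :=
      Finset.mem_filter.1 (Finset.mem_sigma.1 hb).2
    have hfilter : (Finset.univ.filter fun y => φ y = ⟨H, x₀⟩)
        = Finset.univ.filter fun y => x₀⁻¹ * y ∈ H := by
      ext y
      simp only [Finset.mem_filter, Finset.mem_univ, true_and, φ, Sigma.mk.injEq]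
      constructor
      · rintro ⟨rfl, hrep_eq⟩
        rw [← eq_of_heq hrep_eq]
        exact (hrep _ y).2
      · intro hy
        have hyK := (conj_inv_smul_eq_iff_of_inv_mul_mem hy).1 hx₀K
        subst hyK
        exact ⟨rfl, heq_of_eq ((hTr _ y).unique (hrep _ y) ⟨hx₀, hy⟩)⟩
    rw [hfilter, card_filter_inv_mul_mem, ← hx₀K, card_mulAut_smul]
  have hcount := Finset.card_eq_sum_card_fiberwise hφ
  rw [Finset.sum_congr rfl hfiber, Finset.sum_const, smul_eq_mul, Finset.card_univ,
    ← Nat.card_eq_fintype_card, ← K.index_mul_card, Finset.card_sigma] at hcount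
  exact (Nat.eq_of_mul_eq_mul_right Nat.card_pos hcount).symm

end Subgroup

section TauBeta

variable (p : ℕ) [Fact p.Prime] {G : Type*} [Group G]

-- `τ^G_{C,H}`, with the denominator `[G : N_G H]·|W_G H|` written as `[G : H]`.
noncomputable def tauCyc (H : Subgroup G) :
    MonoidAlgebra ℤ_[p] H →ₗ[ℤ_[p]] ConjClasses G →₀ ℚ_[p] :=
  Finsupp.linearCombination ℤ_[p] (fun h : H =>
    if Subgroup.zpowers (h : G) = H then
      (H.index : ℚ_[p])⁻¹ • Finsupp.single (ConjClasses.mk (h : G)) 1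
    else 0) ∘ₗ (MonoidAlgebra.coeffLinearEquiv ℤ_[p]).toLinearMap

lemma tauCyc_single (H : Subgroup G) (h : H) :
    tauCyc p H (MonoidAlgebra.single h 1) =
      if Subgroup.zpowers (h : G) = H then
        (H.index : ℚ_[p])⁻¹ • Finsupp.single (ConjClasses.mk (h : G)) 1
      else 0 := by
  simp [tauCyc, MonoidAlgebra.coeff_single]

lemma tauCyc_bmapCyc (H : Subgroup G) (T : Finset G) (g : G) :
    tauCyc p H (bmapCyc H T g) =
      (T.filter fun x => MulAut.conj x⁻¹ • Subgroup.zpowers g = H).card •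
        ((Subgroup.zpowers g).index : ℚ_[p])⁻¹ • Finsupp.single (ConjClasses.mk g) 1 := by
  rw [bmapCyc, map_sum, ← Finset.sum_const, Finset.sum_filter]
  refine Finset.sum_congr rfl fun x _ => ?_
  simp only [Subgroup.conj_inv_smul_zpowers]
  split_ifs with hmem hgen hgen
  · rw [tauCyc_single, if_pos hgen]
    have hconj : ConjClasses.mk (x⁻¹ * g * x) = ConjClasses.mk g :=
      ConjClasses.mk_eq_mk_iff_isConj.2 (isConj_iff.2 ⟨x, by group⟩)
    have hindex : H.index = (Subgroup.zpowers g).index := by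
      rw [← hgen, ← Subgroup.conj_inv_smul_zpowers, Subgroup.index_mulAut_smul]
    rw [hindex, Subgroup.coe_mk, hconj]
  · rw [tauCyc_single, if_neg hgen]
  · exact absurd (hgen ▸ Subgroup.mem_zpowers _) hmem
  · exact map_zero _

noncomputable def betaLin (Tr : Subgroup G → Finset G) :
    (ConjClasses G →₀ ℤ_[p]) →ₗ[ℤ_[p]] ∀ H : Subgroup G, MonoidAlgebra ℤ_[p] H :=
  Finsupp.linearCombination ℤ_[p] fun c H => bmapCyc H (Tr H) c.out

lemma betaFull_eq_betaLin (Tr : Subgroup G → Finset G) : betaFull (p := p) Tr = betaLin p Tr := by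
  ext v H
  simp [betaFull, betaLin, Finsupp.linearCombination_apply, Finsupp.sum, Finset.sum_apply]

variable (G) [Fintype G]

noncomputable def tauLin :
    (∀ H : Subgroup G, MonoidAlgebra ℤ_[p] H) →ₗ[ℤ_[p]] ConjClasses G →₀ ℚ_[p] :=
  ∑ H ∈ Finset.univ.filter (fun H : Subgroup G => IsCyclic H), tauCyc p H ∘ₗ LinearMap.proj H

variable {p G}

lemma tauFull_eq_tauLin (a : ∀ H : Subgroup G, MonoidAlgebra ℤ_[p] H) :
    tauFull a = tauLin p G a := by
  rw [tauFull, tauLin, LinearMap.sum_apply]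
  refine Finset.sum_congr rfl fun H _ => ?_
  simp only [LinearMap.comp_apply, LinearMap.proj_apply, tauCyc, LinearEquiv.coe_coe,
    MonoidAlgebra.coeffLinearEquiv_apply, Finsupp.linearCombination_apply]
  refine Finsupp.sum_congr fun h _ => ?_
  rw [mul_comm, ← Nat.cast_mul, Subgroup.relIndex_mul_index Subgroup.le_normalizer]
  split_ifs
  · rw [div_eq_mul_inv, mul_smul, ← PadicInt.algebraMap_apply, algebraMap_smul]
  · exact (smul_zero _).symm

theorem tauFull_bmapCyc (Tr : Subgroup G → Finset G)
    (hTr : ∀ H : Subgroup G, ∀ g : G, ∃! x, x ∈ Tr H ∧ x⁻¹ * g ∈ H) (g : G) :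
    tauFull (fun H => bmapCyc (p := p) H (Tr H) g) = Finsupp.single (ConjClasses.mk g) 1 := by
  have hindex : ((Subgroup.zpowers g).index : ℚ_[p]) ≠ 0 :=
    Nat.cast_ne_zero.2 Subgroup.index_ne_zero_of_finite
  rw [tauFull_eq_tauLin, tauLin, LinearMap.sum_apply]
  simp only [LinearMap.comp_apply, LinearMap.proj_apply, tauCyc_bmapCyc]
  rw [← Finset.sum_smul, Finset.sum_filter_of_ne,
    Subgroup.sum_card_filter_conj_inv_smul_eq_index Tr hTr, ← Nat.cast_smul_eq_nsmul ℚ_[p],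
    smul_smul, mul_inv_cancel₀ hindex, one_smul]
  intro H _ hne
  obtain ⟨x, hx⟩ := Finset.card_pos.1 (Nat.pos_of_ne_zero hne)
  rw [← (Finset.mem_filter.1 hx).2, Subgroup.conj_inv_smul_zpowers]
  infer_instance

theorem tauLin_comp_betaLin (Tr : Subgroup G → Finset G)
    (hTr : ∀ H : Subgroup G, ∀ g : G, ∃! x, x ∈ Tr H ∧ x⁻¹ * g ∈ H) :
    tauLin p G ∘ₗ betaLin p Tr = Finsupp.mapRange.linearMap (Algebra.linearMap ℤ_[p] ℚ_[p]) := by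
  refine Finsupp.lhom_ext fun c z => ?_
  have hc : ConjClasses.mk c.out = c := c.out_eq
  rw [LinearMap.comp_apply, betaLin, Finsupp.linearCombination_single, map_smul,
    ← tauFull_eq_tauLin, tauFull_bmapCyc Tr hTr, hc, Finsupp.mapRange.linearMap_apply,
    Finsupp.mapRange_single, Finsupp.smul_single, Algebra.linearMap_apply, Algebra.smul_def,
    mul_one]

end TauBeta

theorem stmt4 (p : ℕ) [Fact p.Prime] (G : Type*) [Group G] [Fintype G]
    (Tr : Subgroup G → Finset G)
    (hTr : ∀ H : Subgroup G, ∀ g : G, ∃! x, x ∈ Tr H ∧ x⁻¹ * g ∈ H) :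
    (∀ g : G,
      tauFull (fun H => bmapCyc (p := p) H (Tr H) g)
        = Finsupp.single (ConjClasses.mk g) (1 : ℚ_[p])) ∧
    Function.Injective (betaFull (p := p) Tr) := by
  refine ⟨tauFull_bmapCyc Tr hTr, ?_⟩
  rw [betaFull_eq_betaLin]
  refine Function.Injective.of_comp (f := tauLin p G) ?_
  rw [← LinearMap.coe_comp, tauLin_comp_betaLin Tr hTr]
  exact Finsupp.mapRange_injective _ (map_zero _) Subtype.coe_injective
end

section
/- Let G be a finite group and H ≤ H₁ ≤ G with [H₁,H₁] ≤ H. Then for every g ∈ G, tr_{H,H₁}(β^G_{H₁}([g])) = π_{H,H₁}(β^G_H([g])), where tr_{H,H₁}: Z_p[H₁^{ab}] → Z_p[H/[H₁,H₁]] is the trace map (sending h̄ to [H₁:H]·h̄ if h ∈ H and to 0 otherwise) and π_{H,H₁}: Z_p[H^{ab}] → Z_p[H/[H₁,H₁]] is induced by the natural surjection H^{ab} → H/[H₁,H₁]. -/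
/- STATEMENT 7: for `H ≤ H₁ ≤ G` with `[H₁,H₁] ≤ H` and any `g ∈ G`,
`tr_{H,H₁}(β^G_{H₁}([g])) = π_{H,H₁}(β^G_H([g]))`, where `tr_{H,H₁}` is the trace map
`ℤ_p[H₁^{ab}] → ℤ_p[H/[H₁,H₁]]` (sending `h̄ ↦ [H₁:H]·h̄` for `h̄` in the subgroup,
`0` otherwise) and `π_{H,H₁}` is induced by the natural surjection
`H^{ab} → H/[H₁,H₁]`. -/

open scoped Classical

/-- `H/[H₁,H₁]`, realised as the image of `H` in `H₁^{ab}`. -/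
def Smap {G : Type*} [Group G] (H H₁ : Subgroup G) : Subgroup (Abelianization ↥H₁) :=
  Subgroup.map Abelianization.of (H.subgroupOf H₁)

/-- The trace map `tr_{H,H₁} : ℤ_p[H₁^{ab}] → ℤ_p[H/[H₁,H₁]]`. -/
noncomputable def trMap {p : ℕ} [Fact p.Prime] {G : Type*} [Group G] (H H₁ : Subgroup G)
    (x : MonoidAlgebra ℤ_[p] (Abelianization ↥H₁)) : MonoidAlgebra ℤ_[p] ↥(Smap H H₁) :=
  x.coeff.sum fun k c =>
    if hk : k ∈ Smap H H₁ then
      MonoidAlgebra.single (⟨k, hk⟩ : ↥(Smap H H₁)) ((H.relIndex H₁ : ℤ_[p]) * c)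
    else 0

/-- The natural map `H → H/[H₁,H₁]` (through the inclusion `H ≤ H₁`). -/
def toS {G : Type*} [Group G] (H H₁ : Subgroup G) (hle : H ≤ H₁) : ↥H →* ↥(Smap H H₁) :=
  MonoidHom.codRestrict (Abelianization.of.comp (Subgroup.inclusion hle)) _
    (fun h => ⟨Subgroup.inclusion hle h, by simp [Subgroup.mem_subgroupOf], rfl⟩)

/-- `π_{H,H₁} : ℤ_p[H^{ab}] → ℤ_p[H/[H₁,H₁]]`. -/
noncomputable def piMap {p : ℕ} [Fact p.Prime] {G : Type*} [Group G] (H H₁ : Subgroup G)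
    (hle : H ≤ H₁) (x : MonoidAlgebra ℤ_[p] (Abelianization ↥H)) :
    MonoidAlgebra ℤ_[p] ↥(Smap H H₁) :=
  MonoidAlgebra.mapDomain (Abelianization.lift (toS H H₁ hle)) x

/-! Sort the summands `x⁻¹ g x` (`x ∈ T`) of `β^G_H([g])` by the coset `x₁ H₁` (`x₁ ∈ T₁`)
containing `x`. Writing `x = x₁ t` with `t ∈ H₁`, the element `x⁻¹ g x = t⁻¹ (x₁⁻¹ g x₁) t` lies
in `H` iff `x₁⁻¹ g x₁` does, because `[H₁,H₁] ≤ H` makes `H` normal in `H₁`, and both have the same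
image in `H₁^{ab}`. Each coset `x₁ H₁` contains `[H₁ : H]` elements of `T`, which is the factor
in the trace. -/

open Finset
open scoped commutatorElement

section Transversal

variable {G : Type*} [Group G] {H H₁ : Subgroup G}

theorem conj_mem_of_commutator_le (hcomm : ⁅H₁, H₁⁆ ≤ H) {y t : G} (hy₁ : y ∈ H₁) (hy : y ∈ H)
    (ht : t ∈ H₁) : t⁻¹ * y * t ∈ H := by
  have hconj : t⁻¹ * y * t = y * ⁅y⁻¹, t⁻¹⁆ := by rw [commutatorElement_def]; group
  rw [hconj]
  exact mul_mem hy (hcomm (Subgroup.commutator_mem_commutator (inv_mem hy₁) (inv_mem ht)))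

theorem conj_mem_iff_of_commutator_le (hle : H ≤ H₁) (hcomm : ⁅H₁, H₁⁆ ≤ H) {y t : G}
    (ht : t ∈ H₁) : t⁻¹ * y * t ∈ H ↔ y ∈ H := by
  refine ⟨fun h => ?_, fun h => conj_mem_of_commutator_le hcomm (hle h) h ht⟩
  have hy : y = t * (t⁻¹ * y * t) * t⁻¹ := by group
  rw [hy]
  simpa using conj_mem_of_commutator_le hcomm (hle h) h (inv_mem ht)

theorem of_mem_Smap_iff (hcomm : ⁅H₁, H₁⁆ ≤ H) (a : H₁) :
    Abelianization.of a ∈ Smap H H₁ ↔ (a : G) ∈ H := by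
  refine ⟨fun ⟨b, hb, hba⟩ => ?_, fun ha => ⟨a, Subgroup.mem_subgroupOf.mpr ha, rfl⟩⟩
  have hcomm' : b⁻¹ * a ∈ commutator H₁ := QuotientGroup.eq.mp hba
  have hmap : (commutator H₁).map H₁.subtype = ⁅H₁, H₁⁆ := by
    rw [commutator_def, Subgroup.map_commutator, ← MonoidHom.range_eq_map,
      Subgroup.range_subtype]
  have hba_mem : ((b⁻¹ * a : H₁) : G) ∈ ⁅H₁, H₁⁆ := hmap ▸ ⟨_, hcomm', rfl⟩
  simpa using mul_mem (Subgroup.mem_subgroupOf.mp hb) (hcomm hba_mem)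

theorem card_filter_inv_mul_mem_eq_relIndex (hle : H ≤ H₁) {T : Finset G}
    (hT : ∀ g : G, ∃! x, x ∈ T ∧ x⁻¹ * g ∈ H) (x₁ : G) :
    #{x ∈ T | x₁⁻¹ * x ∈ H₁} = H.relIndex H₁ := by
  rw [← Nat.card_eq_finsetCard, Subgroup.relIndex, Subgroup.index]
  refine Nat.card_eq_of_bijective
    (fun x => QuotientGroup.mk (⟨x₁⁻¹ * x, (mem_filter.mp x.2).2⟩ : H₁)) ⟨?_, ?_⟩
  · rintro ⟨a, ha⟩ ⟨b, hb⟩ hab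
    rw [QuotientGroup.eq, Subgroup.mem_subgroupOf] at hab
    have hab' : a⁻¹ * b ∈ H := by simpa [mul_assoc] using hab
    exact Subtype.ext <| (hT b).unique ⟨(mem_filter.mp ha).1, hab'⟩
      ⟨(mem_filter.mp hb).1, by simp⟩
  · intro q
    obtain ⟨t, rfl⟩ := QuotientGroup.mk_surjective q
    obtain ⟨x, ⟨hxT, hxH⟩, -⟩ := hT (x₁ * t)
    have hx : x₁⁻¹ * x ∈ H₁ := by
      have hx_eq : x₁⁻¹ * x = t * (x⁻¹ * (x₁ * t))⁻¹ := by group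
      rw [hx_eq]
      exact mul_mem t.2 (hle (inv_mem hxH))
    refine ⟨⟨x, mem_filter.mpr ⟨hxT, hx⟩⟩, ?_⟩
    rw [QuotientGroup.eq, Subgroup.mem_subgroupOf]
    simpa [mul_assoc] using hxH

theorem sum_eq_sum_sum_filter_inv_mul_mem {M : Type*} [AddCommMonoid M] {K : Subgroup G}
    {T : Finset G} (hT : ∀ g : G, ∃! x, x ∈ T ∧ x⁻¹ * g ∈ K) (s : Finset G) (f : G → M) :
    ∑ x ∈ s, f x = ∑ x₁ ∈ T, ∑ x ∈ s with x₁⁻¹ * x ∈ K, f x := by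
  rw [sum_comm' (t' := s) (s' := fun x => {x₁ ∈ T | x₁⁻¹ * x ∈ K})
    (fun x₁ x => by simp only [mem_filter]; tauto)]
  refine sum_congr rfl fun x _ => ?_
  obtain ⟨x₁, hx₁, huniq⟩ := hT x
  rw [eq_singleton_iff_unique_mem.mpr ⟨mem_filter.mpr hx₁,
    fun y hy => huniq y (mem_filter.mp hy)⟩, sum_singleton]

end Transversal

section GroupAlgebra

variable {p : ℕ} [Fact p.Prime] {G : Type*} [Group G] {H H₁ : Subgroup G}

theorem trMap_single (k : Abelianization H₁) (c : ℤ_[p]) :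
    trMap H H₁ (MonoidAlgebra.single k c) =
      if hk : k ∈ Smap H H₁ then MonoidAlgebra.single ⟨k, hk⟩ ((H.relIndex H₁ : ℤ_[p]) * c)
      else 0 :=
  Finsupp.sum_single_index (by split_ifs <;> simp)

theorem trMap_add (x y : MonoidAlgebra ℤ_[p] (Abelianization H₁)) :
    trMap H H₁ (x + y) = trMap H H₁ x + trMap H H₁ y :=
  Finsupp.sum_add_index' (fun _ => by split_ifs <;> simp)
    (fun _ _ _ => by split_ifs <;> simp [mul_add, MonoidAlgebra.single_add])

theorem trMap_sum {ι : Type*} (s : Finset ι) (f : ι → MonoidAlgebra ℤ_[p] (Abelianization H₁)) :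
    trMap H H₁ (∑ i ∈ s, f i) = ∑ i ∈ s, trMap H H₁ (f i) :=
  map_sum (AddMonoidHom.mk' (trMap H H₁) trMap_add) f s

theorem piMap_sum (hle : H ≤ H₁) {ι : Type*} (s : Finset ι)
    (f : ι → MonoidAlgebra ℤ_[p] (Abelianization H)) :
    piMap H H₁ hle (∑ i ∈ s, f i) = ∑ i ∈ s, piMap H H₁ hle (f i) :=
  map_sum (MonoidAlgebra.mapDomainRingHom ℤ_[p] (Abelianization.lift (toS H H₁ hle))) f s

variable (p) in
/-- The image in `ℤ_p[H/[H₁,H₁]]` of a summand `x⁻¹ g x` of `β^G_H([g])`. -/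
noncomputable def singleOfMem (hle : H ≤ H₁) (y : G) : MonoidAlgebra ℤ_[p] (Smap H H₁) :=
  if hy : y ∈ H then MonoidAlgebra.single (toS H H₁ hle ⟨y, hy⟩) 1 else 0

theorem piMap_dite_single (hle : H ≤ H₁) (y : G) :
    piMap H H₁ hle (if hy : y ∈ H then MonoidAlgebra.single (Abelianization.of ⟨y, hy⟩) 1 else 0)
      = singleOfMem p hle y := by
  unfold singleOfMem piMap
  split_ifs
  · rw [MonoidAlgebra.mapDomain_single, Abelianization.lift_apply_of]
  · exact MonoidAlgebra.mapDomain_zero _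

theorem trMap_dite_single (hle : H ≤ H₁) (hcomm : ⁅H₁, H₁⁆ ≤ H) (y : G) :
    trMap H H₁ (if hy : y ∈ H₁ then MonoidAlgebra.single (Abelianization.of ⟨y, hy⟩) 1 else 0)
      = (H.relIndex H₁ : ℤ_[p]) • singleOfMem p hle y := by
  unfold singleOfMem
  by_cases hy : y ∈ H
  · rw [dif_pos (hle hy), trMap_single, dif_pos ((of_mem_Smap_iff hcomm _).mpr hy), dif_pos hy,
      MonoidAlgebra.smul_single']
    rfl
  · rw [dif_neg hy, smul_zero]
    split_ifs
    · rw [trMap_single, dif_neg (by simpa [of_mem_Smap_iff hcomm] using hy)]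
    · exact Finsupp.sum_zero_index

theorem singleOfMem_conj (hle : H ≤ H₁) (hcomm : ⁅H₁, H₁⁆ ≤ H) {t : G} (ht : t ∈ H₁) (y : G) :
    singleOfMem p hle (t⁻¹ * y * t) = singleOfMem p hle y := by
  unfold singleOfMem
  by_cases hy : y ∈ H
  · rw [dif_pos hy, dif_pos ((conj_mem_iff_of_commutator_le hle hcomm ht).mpr hy)]
    congr 1
    refine Subtype.ext ?_
    change Abelianization.of (⟨t, ht⟩⁻¹ * ⟨y, hle hy⟩ * ⟨t, ht⟩ : H₁) = Abelianization.of _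
    rw [map_mul, map_mul, mul_right_comm, ← map_mul, inv_mul_cancel, map_one, one_mul]
    rfl
  · rw [dif_neg hy, dif_neg (by rwa [conj_mem_iff_of_commutator_le hle hcomm ht])]

end GroupAlgebra

theorem stmt7_general (p : ℕ) [Fact p.Prime] (G : Type*) [Group G]
    (H H₁ : Subgroup G) (hle : H ≤ H₁) (hcomm : ⁅H₁, H₁⁆ ≤ H)
    (T : Finset G) (hT : ∀ g : G, ∃! x, x ∈ T ∧ x⁻¹ * g ∈ H)
    (T₁ : Finset G) (hT₁ : ∀ g : G, ∃! x, x ∈ T₁ ∧ x⁻¹ * g ∈ H₁) (g : G) :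
    trMap (p := p) H H₁ (bmap H₁ T₁ g) = piMap (p := p) H H₁ hle (bmap H T g) := by
  have hcoset : ∀ x₁ ∈ T₁, ∑ x ∈ T with x₁⁻¹ * x ∈ H₁, singleOfMem p hle (x⁻¹ * g * x) =
      (H.relIndex H₁ : ℤ_[p]) • singleOfMem p hle (x₁⁻¹ * g * x₁) := by
    intro x₁ _
    have hconj : ∀ x ∈ {x ∈ T | x₁⁻¹ * x ∈ H₁},
        singleOfMem p hle (x⁻¹ * g * x) = singleOfMem p hle (x₁⁻¹ * g * x₁) := fun x hx => by
      rw [← singleOfMem_conj hle hcomm (mem_filter.mp hx).2 (x₁⁻¹ * g * x₁)]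
      congr 1
      group
    rw [sum_congr rfl hconj, sum_const, card_filter_inv_mul_mem_eq_relIndex hle hT,
      Nat.cast_smul_eq_nsmul]
  calc trMap H H₁ (bmap H₁ T₁ g)
      = ∑ x₁ ∈ T₁, (H.relIndex H₁ : ℤ_[p]) • singleOfMem p hle (x₁⁻¹ * g * x₁) := by
        simp only [bmap, trMap_sum, trMap_dite_single hle hcomm]
    _ = ∑ x ∈ T, singleOfMem p hle (x⁻¹ * g * x) := by
        rw [sum_eq_sum_sum_filter_inv_mul_mem hT₁ T]
        exact (sum_congr rfl hcoset).symm
    _ = piMap H H₁ hle (bmap H T g) := by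
        simp only [bmap, piMap_sum, piMap_dite_single]

theorem stmt7 (p : ℕ) [Fact p.Prime] (G : Type*) [Group G] [Fintype G]
    (H H₁ : Subgroup G) (hle : H ≤ H₁) (hcomm : ⁅H₁, H₁⁆ ≤ H)
    (T : Finset G) (hT : ∀ g : G, ∃! x, x ∈ T ∧ x⁻¹ * g ∈ H)
    (T₁ : Finset G) (hT₁ : ∀ g : G, ∃! x, x ∈ T₁ ∧ x⁻¹ * g ∈ H₁) (g : G) :
    trMap (p := p) H H₁ (bmap H₁ T₁ g) = piMap (p := p) H H₁ hle (bmap H T g) :=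
  stmt7_general p G H H₁ hle hcomm T hT T₁ hT₁ g
end

section
/- Let G be a finite group, g ∈ G, and let P_g be the cyclic subgroup generated by g. For H a cyclic subgroup of G, define v_H on the tuple (β^G_P([g]))_{P cyclic} by v_H((a_P)) = Σ_{P cyclic, P^p ≤ H} ([P:P^p]/[H:P^p]) · ver_{P,P^p}(η_P(a_P)) ∈ Z_p[H], where ver is the p-power map P → P^p ⊆ H and η_P kills non-generators of P. Then v_H(β^G_C([g])) = β^G_{C,H}([g^p]); i.e., the diagram intertwining β^G_C with the map φ: [g] ↦ [g^p] on Z_p[Conj(G)] commutes. -/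
/- STATEMENT 10: `G` a finite `p`-group, `H` a cyclic subgroup, `g ∈ G`.  With
`v_H((a_P)) = Σ_{P cyclic, P^p ≤ H} ([P:P^p]/[H:P^p]) · ver_{P,P^p}(η_P(a_P))`,
one has `v_H(β^G_C([g])) = β^G_{C,H}([g^p])`: the diagram intertwining `β^G_C`
with `φ : [g] ↦ [g^p]` commutes. -/

open scoped Classical

/-- `β^G_{C,H}([g]) ∈ ℚ_p[H]` computed with the transversal `T`. -/
noncomputable def bmapCycQ {p : ℕ} [Fact p.Prime] {G : Type*} [Group G]
    (H : Subgroup G) (T : Finset G) (g : G) : MonoidAlgebra ℚ_[p] ↥H :=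
  ∑ x ∈ T, if h : x⁻¹ * g * x ∈ H then
    MonoidAlgebra.single (⟨x⁻¹ * g * x, h⟩ : ↥H) (1 : ℚ_[p]) else 0

/-- `η_P` : kills the non-generators of `P`, fixes the generators. -/
noncomputable def etaMap {p : ℕ} [Fact p.Prime] {G : Type*} [Group G] (P : Subgroup G)
    (x : MonoidAlgebra ℚ_[p] ↥P) : MonoidAlgebra ℚ_[p] ↥P :=
  x.coeff.sum fun h c => if Subgroup.zpowers (h : G) = P then MonoidAlgebra.single h c else 0

/-- `P^p`, the subgroup generated by the `p`-th powers of elements of `P`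
(equal to `{x^p : x ∈ P}` for `P` cyclic). -/
def Pp {G : Type*} [Group G] (p : ℕ) (P : Subgroup G) : Subgroup G :=
  Subgroup.closure ((fun x => x ^ p) '' (P : Set G))

/-- `ver_{P,P^p} : ℚ_p[P] → ℚ_p[H]`, induced by `y ↦ y^p` (assuming `y^p ∈ H` for
all `y ∈ P`). -/
noncomputable def verMap {p : ℕ} [Fact p.Prime] {G : Type*} [Group G] (P H : Subgroup G)
    (hc : ∀ y ∈ P, y ^ p ∈ H) (x : MonoidAlgebra ℚ_[p] ↥P) : MonoidAlgebra ℚ_[p] ↥H :=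
  MonoidAlgebra.ofCoeff (Finsupp.mapDomain (fun y : ↥P => (⟨y.1 ^ p, hc y.1 y.2⟩ : ↥H)) x.coeff)

/-!
Compare coefficients at `h ∈ H`. Since `H` is abelian, the indicator of `x⁻¹ g^p x = h` is
right `H`-invariant, so the sum over the transversal of `H` is `|H|⁻¹` times the sum over all
`x ∈ G`. Likewise the `P`-summand only sees those `x` with `⟨x⁻¹ g x⟩ = P`, an indicator that is
right `P`-invariant, so it becomes `|P|⁻¹` times a sum over `G`. After exchanging the sums, each
`x` meets only `P = ⟨x⁻¹ g x⟩`, and for it `[P : P^p] / [H : P^p] = |P| / |H|`.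
-/

open MonoidAlgebra Subgroup

section Conjugation

variable {G : Type*} [Group G]

lemma commute_of_mem_zpowers {k z : G} (hk : k ∈ zpowers z) : Commute k z :=
  setLike_mul_comm hk (mem_zpowers z)

lemma zpowers_inv_mul_mul_eq_iff {P : Subgroup G} {k : G} (hk : k ∈ P) (z : G) :
    zpowers (k⁻¹ * z * k) = P ↔ zpowers z = P := by
  constructor
  · intro h
    rwa [← show k * (k⁻¹ * z * k) * k⁻¹ = z by group,
      (commute_of_mem_zpowers (h ▸ hk)).mul_inv_cancel]
  · intro h
    rwa [(commute_of_mem_zpowers (h ▸ hk)).inv_mul_cancel]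

lemma zpowers_inv_mul_mul_eq_and_pow_eq_iff {P : Subgroup G} {k : G} (hk : k ∈ P)
    (z h : G) (n : ℕ) :
    zpowers (k⁻¹ * z * k) = P ∧ (k⁻¹ * z * k) ^ n = h ↔ zpowers z = P ∧ z ^ n = h := by
  rw [zpowers_inv_mul_mul_eq_iff hk]
  exact and_congr_right fun hz => by rw [(commute_of_mem_zpowers (hz ▸ hk)).inv_mul_cancel]

lemma inv_mul_mul_pow (k z : G) (n : ℕ) : (k⁻¹ * z * k) ^ n = k⁻¹ * z ^ n * k := by
  simpa using conj_pow (a := k⁻¹) (b := z) (i := n)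

lemma inv_mul_mul_pow_eq_iff {k h : G} (hk : Commute k h) (z : G) (n : ℕ) :
    (k⁻¹ * z * k) ^ n = h ↔ z ^ n = h := by
  conv_lhs => rw [inv_mul_mul_pow, ← hk.inv_mul_cancel]
  simp only [mul_left_inj, mul_right_inj]

lemma sum_eq_card_nsmul_sum_of_transversal [Fintype G] {M : Type*} [AddCommMonoid M]
    (K : Subgroup G) (T : Finset G) (hT : ∀ g : G, ∃! x, x ∈ T ∧ x⁻¹ * g ∈ K)
    (f : G → M) (hf : ∀ x, ∀ k ∈ K, f (x * k) = f x) :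
    ∑ x, f x = Nat.card K • ∑ t ∈ T, f t := by
  have hcompl : IsComplement (T : Set G) K :=
    isComplement_iff_existsUnique_inv_mul_mem.2 fun g => by
      obtain ⟨x, ⟨hxT, hxg⟩, hu⟩ := hT g
      exact ⟨⟨x, hxT⟩, hxg, fun y hy => Subtype.ext (hu y ⟨y.2, hy⟩)⟩
  have : Fintype K := Fintype.ofFinite K
  calc ∑ x, f x = ∑ tk : T × K, f (tk.1 * tk.2) :=
        (Fintype.sum_bijective (fun tk : T × K => (tk.1 : G) * tk.2) hcompl _ _
          fun _ => rfl).symm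
    _ = ∑ t : T, Nat.card K • f t := by
        rw [Fintype.sum_prod_type]
        refine Fintype.sum_congr _ _ fun t => ?_
        simp [hf t _ (SetLike.coe_mem _), Finset.card_univ, Nat.card_eq_fintype_card]
    _ = _ := by rw [← Finset.smul_sum, Finset.sum_coe_sort T f]

lemma sum_conj_eq_card_nsmul_sum_of_transversal [Fintype G] {M : Type*} [AddCommMonoid M]
    (K : Subgroup G) (T : Finset G) (hT : ∀ g : G, ∃! x, x ∈ T ∧ x⁻¹ * g ∈ K)
    (φ : G → M) (hφ : ∀ z, ∀ k ∈ K, φ (k⁻¹ * z * k) = φ z) (g : G) :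
    ∑ x, φ (x⁻¹ * g * x) = Nat.card K • ∑ t ∈ T, φ (t⁻¹ * g * t) :=
  sum_eq_card_nsmul_sum_of_transversal K T hT _ fun x k hk => by
    rw [show (x * k)⁻¹ * g * (x * k) = k⁻¹ * (x⁻¹ * g * x) * k by group, hφ _ _ hk]

end Conjugation

section GroupAlgebra

variable {p : ℕ} [Fact p.Prime] {G : Type*} [Group G]

lemma coeff_bmapCycQ (H : Subgroup G) (T : Finset G) (g : G) (h : H) :
    (bmapCycQ (p := p) H T g).coeff h = ∑ x ∈ T, if x⁻¹ * g * x = h then 1 else 0 := by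
  unfold bmapCycQ
  rw [coeff_sum, Finset.sum_apply']
  refine Finset.sum_congr rfl fun x _ => ?_
  split_ifs with hx hxh hxh <;> simp_all [Subtype.ext_iff]

lemma etaMap_zero (P : Subgroup G) : etaMap (p := p) P 0 = 0 := by
  simp [etaMap]

lemma etaMap_sum {ι : Type*} (P : Subgroup G) (s : Finset ι) (f : ι → MonoidAlgebra ℚ_[p] P) :
    etaMap P (∑ i ∈ s, f i) = ∑ i ∈ s, etaMap P (f i) := by
  unfold etaMap
  rw [coeff_sum, Finsupp.sum_finsetSum_index] <;> intros <;> split_ifs <;> simp [single_add]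

lemma etaMap_single (P : Subgroup G) (a : P) (c : ℚ_[p]) :
    etaMap P (single a c) = if zpowers (a : G) = P then single a c else 0 := by
  unfold etaMap
  rw [coeff_single, Finsupp.sum_single_index]
  split_ifs <;> simp

lemma verMap_zero {P H : Subgroup G} (hc : ∀ y ∈ P, y ^ p ∈ H) : verMap P H hc 0 = 0 := by
  ext1
  simp [verMap]

lemma verMap_sum {ι : Type*} {P H : Subgroup G} (hc : ∀ y ∈ P, y ^ p ∈ H) (s : Finset ι)
    (f : ι → MonoidAlgebra ℚ_[p] P) :
    verMap P H hc (∑ i ∈ s, f i) = ∑ i ∈ s, verMap P H hc (f i) := by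
  ext1
  simp [verMap, Finsupp.mapDomain_finsetSum]

lemma verMap_single {P H : Subgroup G} (hc : ∀ y ∈ P, y ^ p ∈ H) (a : P) (c : ℚ_[p]) :
    verMap P H hc (single a c) = single ⟨a.1 ^ p, hc a.1 a.2⟩ c := by
  ext1
  simp [verMap]

lemma coeff_verMap_etaMap_bmapCycQ {P H : Subgroup G} (hc : ∀ y ∈ P, y ^ p ∈ H)
    (T : Finset G) (g : G) (h : H) :
    (verMap P H hc (etaMap P (bmapCycQ P T g))).coeff h =
      ∑ x ∈ T, if zpowers (x⁻¹ * g * x) = P ∧ (x⁻¹ * g * x) ^ p = h then 1 else 0 := by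
  unfold bmapCycQ
  rw [etaMap_sum, verMap_sum, coeff_sum, Finset.sum_apply']
  refine Finset.sum_congr rfl fun x _ => ?_
  by_cases hx : x⁻¹ * g * x ∈ P
  · rw [dif_pos hx, etaMap_single]
    split_ifs with hz <;> simp_all [verMap_single, verMap_zero, Subtype.ext_iff]
  · have hz : zpowers (x⁻¹ * g * x) ≠ P := fun hz => hx (hz ▸ mem_zpowers _)
    simp [hx, hz, etaMap_zero, verMap_zero]

end GroupAlgebra

section Weights

variable {G : Type*} [Group G]

lemma relIndex_div_relIndex_of_le {F : Type*} [Field F] [CharZero F] {K P H : Subgroup G}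
    [Finite K] (hKP : K ≤ P) (hKH : K ≤ H) :
    (K.relIndex P : F) / K.relIndex H = Nat.card P / Nat.card H := by
  have hK : (Nat.card K : F) ≠ 0 := Nat.cast_ne_zero.2 Nat.card_pos.ne'
  rw [← relIndex_bot_left, ← relIndex_bot_left, ← relIndex_mul_relIndex ⊥ K P bot_le hKP,
    ← relIndex_mul_relIndex ⊥ K H bot_le hKH, relIndex_bot_left]
  push_cast
  rw [mul_div_mul_left _ _ hK]

lemma Pp_le_of_pow_mem {p : ℕ} {P K : Subgroup G} (h : ∀ y ∈ P, y ^ p ∈ K) : Pp p P ≤ K :=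
  (closure_le K).2 <| by
    rintro _ ⟨y, hy, rfl⟩
    exact h y hy

lemma pow_mem_of_mem_zpowers {H : Subgroup G} {z : G} {n : ℕ} (hz : z ^ n ∈ H) :
    ∀ y ∈ zpowers z, y ^ n ∈ H := by
  rintro _ ⟨m, rfl⟩
  simpa [← zpow_natCast, ← zpow_mul, mul_comm] using H.zpow_mem hz m

/-- The weight `[P : P^p] / [H : P^p]` of `v_H`, divided by `|P|` to pass from a transversal of
`P` to all of `G`. -/
noncomputable def cyclicWeight (F : Type*) [Field F] (p : ℕ) (H P : Subgroup G) : F :=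
  if ∀ y ∈ P, y ^ p ∈ H then ((Pp p P).relIndex P : F) / (Pp p P).relIndex H / Nat.card P
  else 0

lemma sum_cyclicWeight_mul_ite {F : Type*} [Field F] [CharZero F] [Fintype G]
    (p : ℕ) (H : Subgroup G) (h : H) (z : G) :
    ∑ P ∈ Finset.univ.filter (fun P : Subgroup G => IsCyclic P),
      cyclicWeight F p H P * (if zpowers z = P ∧ z ^ p = h then 1 else 0)
    = (Nat.card H : F)⁻¹ * if z ^ p = h then 1 else 0 := by
  by_cases hz : z ^ p = h
  · have hc := pow_mem_of_mem_zpowers (hz ▸ h.2 : z ^ p ∈ H)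
    rw [Finset.sum_eq_single_of_mem (zpowers z) (by simp [isCyclic_zpowers])
      fun P _ hP => mul_eq_zero_of_right _ (if_neg fun h' => hP h'.1.symm)]
    rw [cyclicWeight, if_pos hc, if_pos ⟨rfl, hz⟩, if_pos hz, relIndex_div_relIndex_of_le
      (Pp_le_of_pow_mem fun y hy => pow_mem hy p) (Pp_le_of_pow_mem hc)]
    have : (Nat.card (zpowers z) : F) ≠ 0 := Nat.cast_ne_zero.2 Nat.card_pos.ne'
    field_simp
  · simp [hz]

lemma coeff_dite_smul_verMap_etaMap_bmapCycQ {p : ℕ} [Fact p.Prime] [Fintype G]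
    (P H : Subgroup G) (T : Finset G) (hT : ∀ g : G, ∃! x, x ∈ T ∧ x⁻¹ * g ∈ P)
    (g : G) (h : H) :
    (if hc : ∀ y ∈ P, y ^ p ∈ H then
        (((Pp p P).relIndex P : ℚ_[p]) / ((Pp p P).relIndex H : ℚ_[p]))
          • verMap (p := p) P H hc (etaMap (p := p) P (bmapCycQ P T g))
      else 0).coeff h
    = cyclicWeight ℚ_[p] p H P *
      ∑ x, if zpowers (x⁻¹ * g * x) = P ∧ (x⁻¹ * g * x) ^ p = h then 1 else 0 := by
  rw [cyclicWeight]
  split_ifs with hc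
  · have hP : (Nat.card P : ℚ_[p]) ≠ 0 := Nat.cast_ne_zero.2 Nat.card_pos.ne'
    rw [coeff_smul, Finsupp.smul_apply, smul_eq_mul, coeff_verMap_etaMap_bmapCycQ,
      sum_conj_eq_card_nsmul_sum_of_transversal P T hT
        (fun z => if zpowers z = P ∧ z ^ p = h then (1 : ℚ_[p]) else 0)
        (fun z k hk => if_congr (zpowers_inv_mul_mul_eq_and_pow_eq_iff hk z h p) rfl rfl),
      nsmul_eq_mul]
    field_simp
  · simp

end Weights

theorem stmt10_general (p : ℕ) [Fact p.Prime] (G : Type*) [Group G] [Fintype G]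
    (Tr : Subgroup G → Finset G)
    (hTr : ∀ H : Subgroup G, ∀ g : G, ∃! x, x ∈ Tr H ∧ x⁻¹ * g ∈ H)
    (H : Subgroup G) (hHcyc : IsCyclic ↥H) (g : G) :
    (∑ P ∈ Finset.univ.filter (fun P : Subgroup G => IsCyclic ↥P),
      if hc : ∀ y ∈ P, y ^ p ∈ H then
        (((Pp p P).relIndex P : ℚ_[p]) / ((Pp p P).relIndex H : ℚ_[p]))
          • verMap (p := p) P H hc (etaMap (p := p) P (bmapCycQ P (Tr P) g))
      else 0)
    = bmapCycQ (p := p) H (Tr H) (g ^ p) := by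
  have hH : (Nat.card H : ℚ_[p]) ≠ 0 := Nat.cast_ne_zero.2 Nat.card_pos.ne'
  ext1
  ext h
  simp_rw [coeff_sum, Finset.sum_apply', coeff_dite_smul_verMap_etaMap_bmapCycQ _ _ _ (hTr _),
    Finset.mul_sum]
  rw [Finset.sum_comm]
  simp_rw [sum_cyclicWeight_mul_ite, ← Finset.mul_sum]
  -- `H` is abelian, so conjugating by `k ∈ H` fixes `h`.
  rw [sum_conj_eq_card_nsmul_sum_of_transversal H (Tr H) (hTr H)
      (fun z => if z ^ p = h then (1 : ℚ_[p]) else 0)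
      (fun z k hk => if_congr (inv_mul_mul_pow_eq_iff (setLike_mul_comm hk h.2) z p) rfl rfl),
    nsmul_eq_mul, inv_mul_cancel_left₀ hH, coeff_bmapCycQ]
  simp_rw [inv_mul_mul_pow]

theorem stmt10 (p : ℕ) [Fact p.Prime] (G : Type*) [Group G] [Fintype G]
    (hG : IsPGroup p G)
    (Tr : Subgroup G → Finset G)
    (hTr : ∀ H : Subgroup G, ∀ g : G, ∃! x, x ∈ Tr H ∧ x⁻¹ * g ∈ H)
    (H : Subgroup G) (hHcyc : IsCyclic ↥H) (g : G) :
    (∑ P ∈ Finset.univ.filter (fun P : Subgroup G => IsCyclic ↥P),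
      if hc : ∀ y ∈ P, y ^ p ∈ H then
        (((Pp p P).relIndex P : ℚ_[p]) / ((Pp p P).relIndex H : ℚ_[p]))
          • verMap (p := p) P H hc (etaMap (p := p) P (bmapCycQ P (Tr P) g))
      else 0)
    = bmapCycQ (p := p) H (Tr H) (g ^ p) :=
  stmt10_general p G Tr hTr H hHcyc g
end

section
/- Let G be a finite group and H a cyclic subgroup. If (a_P)_{P ∈ C} ∈ Π_{P cyclic} Z_p[P] satisfies condition A1 (compatibility under β^{H'}_H for nested cyclic subgroups) and for every cyclic P the coefficients of all generators of P in a_P vanish, then a_P = 0 for all P. Concretely: if H ≤ H' are cyclic subgroups and a_{H'} = Σ_{h ∈ H'} c_h·h, then β^{H'}_H(a_{H'}) = [H':H]·Σ_{h ∈ H} c_h·h, and induction on the subgroup lattice of a cyclic group forces all coefficients to vanish. -/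
open scoped Classical

/-- `β^{H'}_H : ℤ_p[H'] → ℤ_p[H]` for nested (cyclic) subgroups:
`h ↦ [H':H]·h` if `h ∈ H`, else `0`. -/
noncomputable def betaRes {p : ℕ} [Fact p.Prime] {G : Type*} [Group G]
    (H H' : Subgroup G) (x : MonoidAlgebra ℤ_[p] ↥H') : MonoidAlgebra ℤ_[p] ↥H :=
  x.coeff.sum fun h c =>
    if hh : (h : G) ∈ H then
      MonoidAlgebra.single (⟨(h : G), hh⟩ : ↥H) ((H.relIndex H' : ℤ_[p]) * c)
    else 0

section betaRes

variable {p : ℕ} [Fact p.Prime] {G : Type*} [Group G] (H H' : Subgroup G)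

lemma betaRes_coeff (x : MonoidAlgebra ℤ_[p] ↥H') {g : G} (hgH : g ∈ H) (hgH' : g ∈ H') :
    (betaRes H H' x).coeff ⟨g, hgH⟩ = (H.relIndex H' : ℤ_[p]) * x.coeff ⟨g, hgH'⟩ := by
  rw [betaRes, Finsupp.sum, MonoidAlgebra.coeff_sum, Finsupp.finsetSum_apply,
    Finset.sum_eq_single (⟨g, hgH'⟩ : ↥H')]
  · simp [hgH]
  · intro b _ hb
    by_cases hbH : (b : G) ∈ H
    · rw [dif_pos hbH, MonoidAlgebra.coeff_single, Finsupp.single_apply, if_neg]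
      exact fun heq ↦ hb (Subtype.ext (Subtype.mk.inj heq))
    · rw [dif_neg hbH]; rfl
  · intro hns
    simp [Finsupp.notMem_support_iff.mp hns]

lemma betaRes_coeff_eq_zero_iff [Finite H'] (x : MonoidAlgebra ℤ_[p] ↥H') {g : G}
    (hgH : g ∈ H) (hgH' : g ∈ H') :
    (betaRes H H' x).coeff ⟨g, hgH⟩ = 0 ↔ x.coeff ⟨g, hgH'⟩ = 0 := by
  have hindex : (H.relIndex H' : ℤ_[p]) ≠ 0 :=
    Nat.cast_ne_zero.mpr (Subgroup.index_ne_zero_of_finite (H := H.subgroupOf H'))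
  rw [betaRes_coeff H H' x hgH hgH', mul_eq_zero, or_iff_right hindex]

end betaRes

theorem stmt17 (p : ℕ) [Fact p.Prime] (G : Type*) [Group G] [Fintype G]
    (a : ∀ P : Subgroup G, MonoidAlgebra ℤ_[p] ↥P)
    (hA1 : ∀ H H' : Subgroup G, IsCyclic ↥H' → H ≤ H' →
      betaRes (p := p) H H' (a H') = a H)
    (hgen : ∀ P : Subgroup G, IsCyclic ↥P → ∀ h : ↥P,
      Subgroup.zpowers (h : G) = P → (a P).coeff h = 0) :
    ∀ P : Subgroup G, IsCyclic ↥P → a P = 0 := by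
  intro P hP
  ext h
  -- A1 for `⟨h⟩ ≤ P` carries the coefficient of `h` in `a P` to that of `h` in `a ⟨h⟩`,
  -- which vanishes because `h` generates `⟨h⟩`; no induction over subgroups is needed.
  set Q := Subgroup.zpowers (h : G)
  have hQP : Q ≤ P := Subgroup.zpowers_le.mpr h.2
  have hQ : (a Q).coeff ⟨h, Subgroup.mem_zpowers _⟩ = 0 :=
    hgen Q inferInstance ⟨h, Subgroup.mem_zpowers _⟩ rfl
  rwa [← hA1 Q P hP hQP, betaRes_coeff_eq_zero_iff Q P _ _ h.2] at hQ
end
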